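/- arXiv:2603.29243 — 2 statements merged into one kernel-verified Lean document; each statement's English description precedes it below -/
import Mathlib

section
/- Let a, b ∈ ℝ, let I, J ⊆ ℝ be intervals, and let η : J → ℝ² be a differentiable curve with η(τ) ≠ (0,0) for all τ ∈ J that solves the regularized polynomial CDK system, i.e. η'(τ) = Ỹ(η(τ)) for all τ ∈ J. If σ : I → J is a differentiable function satisfying σ'(t) = 1/‖η(σ(t))‖² for all t ∈ I, then the reparametrized curve γ = η ∘ σ solves the singular planar CDK system, i.e. γ'(t) = X(γ(t)) for all t ∈ I. -/
/-- The singular planar CDK vector field. -/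
noncomputable def Xcdk (a b : ℝ) (p : ℝ × ℝ) : ℝ × ℝ :=
  (p.1 * p.2 / (p.1 ^ 2 + p.2 ^ 2) - a * p.1,
   p.2 ^ 2 / (p.1 ^ 2 + p.2 ^ 2) - b * p.2 + b - 1)

/-- The regularized polynomial CDK vector field. -/
noncomputable def Ycdk (a b : ℝ) (p : ℝ × ℝ) : ℝ × ℝ :=
  (p.1 * p.2 - a * (p.1 ^ 3 + p.1 * p.2 ^ 2),
   p.2 ^ 2 - (b * p.2 - b + 1) * (p.1 ^ 2 + p.2 ^ 2))

theorem stmt_2 (a b : ℝ) (I J : Set ℝ) (hI : I.OrdConnected) (hJ : J.OrdConnected)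
    (η : ℝ → ℝ × ℝ)
    (hη0 : ∀ τ ∈ J, η τ ≠ (0, 0))
    (hη : ∀ τ ∈ J, HasDerivAt η (Ycdk a b (η τ)) τ)
    (σ : ℝ → ℝ) (hmap : Set.MapsTo σ I J)
    (hσ : ∀ t ∈ I, HasDerivAt σ (1 / ((η (σ t)).1 ^ 2 + (η (σ t)).2 ^ 2)) t) :
    ∀ t ∈ I, HasDerivAt (η ∘ σ) (Xcdk a b ((η ∘ σ) t)) t := by
  intro t ht
  have hJt := hmap ht
  have hne : η (σ t) ≠ (0, 0) := hη0 _ hJt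
  set p := η (σ t) with hp
  have hr : p.1 ^ 2 + p.2 ^ 2 ≠ 0 := by
    intro h
    apply hne
    have h1 : p.1 = 0 ∧ p.2 = 0 := by
      constructor <;> nlinarith [sq_nonneg p.1, sq_nonneg p.2]
    exact Prod.ext h1.1 h1.2
  have hcomp := HasDerivAt.scomp t (hη _ hJt) (hσ t ht)
  refine hcomp.congr_deriv (Eq.symm ?_)
  have : (η ∘ σ) t = p := rfl
  rw [this, ← hp]
  simp only [Xcdk, Ycdk, Prod.smul_mk, smul_eq_mul]
  ext <;> simp <;> field_simp <;> ring
end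

section
/- Let a, b ∈ ℝ, 0 < r₀ ≤ r₁, and let A = {(x,y) ∈ ℝ² : r₀ ≤ √(x²+y²) ≤ r₁} be an annulus. If γ : I → ℝ² is a differentiable solution of the singular planar CDK system with γ(I) ⊆ A, and σ : J → I is a strictly increasing differentiable surjection with σ'(τ) = ‖γ(σ(τ))‖² for all τ ∈ J, then η = γ ∘ σ is a solution of the regularized polynomial CDK system whose image equals the image of γ; in particular the identity map of A sends the orbit of γ onto an orbit of the regularized system. -/
theorem stmt_3 (a b r₀ r₁ : ℝ) (hr₀ : 0 < r₀) (hr : r₀ ≤ r₁)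
    (A : Set (ℝ × ℝ))
    (hA : A = {p : ℝ × ℝ | r₀ ≤ Real.sqrt (p.1 ^ 2 + p.2 ^ 2) ∧
                Real.sqrt (p.1 ^ 2 + p.2 ^ 2) ≤ r₁})
    (I J : Set ℝ) (hI : I.OrdConnected) (hJ : J.OrdConnected)
    (γ : ℝ → ℝ × ℝ)
    (hγA : γ '' I ⊆ A)
    (hγ : ∀ t ∈ I, HasDerivAt γ (Xcdk a b (γ t)) t)
    (σ : ℝ → ℝ) (hmap : Set.MapsTo σ J I) (hmono : StrictMonoOn σ J)
    (hsurj : Set.SurjOn σ J I)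
    (hσ : ∀ τ ∈ J, HasDerivAt σ ((γ (σ τ)).1 ^ 2 + (γ (σ τ)).2 ^ 2) τ) :
    (∀ τ ∈ J, HasDerivAt (γ ∘ σ) (Ycdk a b ((γ ∘ σ) τ)) τ) ∧
      (γ ∘ σ) '' J = γ '' I := by
  have hIJ : σ '' J = I := Set.Subset.antisymm (hmap.image_subset) hsurj
  constructor
  · intro τ hτ
    have hστ : σ τ ∈ I := hmap hτ
    have hmem : γ (σ τ) ∈ A := hγA ⟨σ τ, hστ, rfl⟩
    set p := γ (σ τ) with hp
    have hs : p.1 ^ 2 + p.2 ^ 2 ≠ 0 := by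
      rw [hA] at hmem
      intro h0
      have := hmem.1
      rw [h0, Real.sqrt_zero] at this
      linarith
    have hd := (hγ (σ τ) hστ).scomp τ (hσ τ hτ)
    have : (p.1 ^ 2 + p.2 ^ 2) • Xcdk a b p = Ycdk a b ((γ ∘ σ) τ) := by
      simp only [Function.comp, ← hp, Xcdk, Ycdk, Prod.smul_mk, smul_eq_mul,
        Prod.mk.injEq]
      constructor <;> field_simp <;> ring
    rwa [this] at hd
  · rw [Set.image_comp, hIJ]
end
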